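/- Suppose a sequence of directions satisfies d_0 = -g_0 and d_k = -g_k + β_k d_{k-1} with |β_k| ≤ ‖g_k‖²/‖g_{k-1}‖², and the line search satisfies the strong Wolfe curvature condition |⟨g_k, d_{k-1}⟩| ≤ -σ₂⟨g_{k-1}, d_{k-1}⟩ with 0 < σ₂ < 1/2. Then for every k with g_k ≠ 0, -1/(1-σ₂) ≤ ⟨g_k, d_k⟩/‖g_k‖² ≤ (2σ₂ - 1)/(1-σ₂); in particular every d_k is a descent direction for g_k. -/

import Mathlib

/-!
Track the normalised slope `rₖ = ⟪gₖ, dₖ⟫ / ‖gₖ‖²`. Expanding `dₖ₊₁` gives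
`rₖ₊₁ = -1 + βₖ₊₁ ⟪gₖ₊₁, dₖ⟫ / ‖gₖ₊₁‖²`, and the FR bound on `β` together with the strong Wolfe
condition bound the perturbation by `σ₂ · (-rₖ) ≤ σ₂ / (1 - σ₂)` as soon as
`rₖ ≥ -1 / (1 - σ₂)`. Hence `rₖ₊₁ ∈ [-1 / (1 - σ₂), (2σ₂ - 1) / (1 - σ₂)]`, which is an
inductive invariant starting from `r₀ = -1`; the upper end is negative because `σ₂ < 1/2`.
-/

open Set RealInnerProductSpace

lemma neg_one_add_mem_Icc_of_abs_le {σ t : ℝ} (hσ : σ < 1) (ht : |t| ≤ σ / (1 - σ)) :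
    -1 + t ∈ Icc (-1 / (1 - σ)) ((2 * σ - 1) / (1 - σ)) := by
  have h1σ : 1 - σ ≠ 0 := by linarith
  have hlo : -1 / (1 - σ) = -1 - σ / (1 - σ) := by field_simp; ring
  have hhi : (2 * σ - 1) / (1 - σ) = -1 + σ / (1 - σ) := by field_simp; ring
  rw [hlo, hhi]
  constructor <;> linarith [abs_le.mp ht]

section InnerProductSpace

variable {E : Type*} [NormedAddCommGroup E] [InnerProductSpace ℝ E]

lemma inner_neg_add_smul_div_norm_sq {g' d : E} (hg' : g' ≠ 0) (β : ℝ) :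
    ⟪g', -g' + β • d⟫ / ‖g'‖ ^ 2 = -1 + β * ⟪g', d⟫ / ‖g'‖ ^ 2 := by
  have : ‖g'‖ ^ 2 ≠ 0 := by positivity
  rw [inner_add_right, inner_neg_right, inner_smul_right, real_inner_self_eq_norm_sq]
  field_simp

lemma inner_neg_add_smul_div_norm_sq_mem_Icc {σ β : ℝ} {g g' d : E}
    (hσ0 : 0 ≤ σ) (hσ1 : σ < 1) (hg : g ≠ 0) (hg' : g' ≠ 0)
    (hβ : |β| ≤ ‖g'‖ ^ 2 / ‖g‖ ^ 2) (hwolfe : |⟪g', d⟫| ≤ -σ * ⟪g, d⟫)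
    (hslope : -1 / (1 - σ) ≤ ⟪g, d⟫ / ‖g‖ ^ 2) :
    ⟪g', -g' + β • d⟫ / ‖g'‖ ^ 2 ∈ Icc (-1 / (1 - σ)) ((2 * σ - 1) / (1 - σ)) := by
  have ha : 0 < ‖g'‖ ^ 2 := by positivity
  have hb : 0 < ‖g‖ ^ 2 := by positivity
  have hslope' : -(⟪g, d⟫ / ‖g‖ ^ 2) ≤ 1 / (1 - σ) := by rw [neg_div] at hslope; linarith
  rw [inner_neg_add_smul_div_norm_sq hg']
  refine neg_one_add_mem_Icc_of_abs_le hσ1 ?_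
  calc |β * ⟪g', d⟫ / ‖g'‖ ^ 2|
      = |β| * |⟪g', d⟫| / ‖g'‖ ^ 2 := by rw [abs_div, abs_mul, abs_of_pos ha]
    _ ≤ ‖g'‖ ^ 2 / ‖g‖ ^ 2 * (-σ * ⟪g, d⟫) / ‖g'‖ ^ 2 := by gcongr
    _ = σ * -(⟪g, d⟫ / ‖g‖ ^ 2) := by field_simp
    _ ≤ σ * (1 / (1 - σ)) := by gcongr
    _ = σ / (1 - σ) := mul_one_div σ (1 - σ)

end InnerProductSpace

/-- Descent-direction bounds for conjugate-gradient directions under the FR bound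
on β_k and the strong Wolfe curvature condition with 0 < σ₂ < 1/2. -/
theorem cg_descent_bounds
    {n : ℕ} (g d : ℕ → EuclideanSpace ℝ (Fin n)) (β : ℕ → ℝ) (σ₂ : ℝ)
    (hσ₂ : 0 < σ₂ ∧ σ₂ < 1 / 2)
    (hg : ∀ k, g k ≠ 0)
    (hd0 : d 0 = -g 0)
    (hdk : ∀ k, 1 ≤ k → d k = -g k + β k • d (k - 1))
    (hβ : ∀ k, 1 ≤ k → |β k| ≤ ‖g k‖ ^ 2 / ‖g (k - 1)‖ ^ 2)
    (hwolfe : ∀ k, 1 ≤ k →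
      |(inner ℝ (g k) (d (k - 1)) : ℝ)| ≤ -σ₂ * inner ℝ (g (k - 1)) (d (k - 1))) :
    ∀ k, (-1 / (1 - σ₂) ≤ (inner ℝ (g k) (d k) : ℝ) / ‖g k‖ ^ 2 ∧
          (inner ℝ (g k) (d k) : ℝ) / ‖g k‖ ^ 2 ≤ (2 * σ₂ - 1) / (1 - σ₂)) ∧
         (inner ℝ (g k) (d k) : ℝ) < 0 := by
  obtain ⟨hσ0, hσ_half⟩ := hσ₂
  have hσ1 : σ₂ < 1 := by linarith
  have hslope :
      ∀ k, ⟪g k, d k⟫ / ‖g k‖ ^ 2 ∈ Icc (-1 / (1 - σ₂)) ((2 * σ₂ - 1) / (1 - σ₂)) := by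
    intro k
    induction k with
    | zero =>
      have hr0 : ⟪g 0, d 0⟫ / ‖g 0‖ ^ 2 = -1 + 0 := by
        rw [hd0, inner_neg_right, real_inner_self_eq_norm_sq, neg_div,
          div_self (by simpa using hg 0), add_zero]
      rw [hr0]
      refine neg_one_add_mem_Icc_of_abs_le hσ1 ?_
      rw [abs_zero]
      exact div_nonneg hσ0.le (by linarith)
    | succ k ih =>
      rw [hdk (k + 1) k.succ_pos]
      exact inner_neg_add_smul_div_norm_sq_mem_Icc hσ0.le hσ1 (hg k) (hg (k + 1))
        (hβ (k + 1) k.succ_pos) (hwolfe (k + 1) k.succ_pos) ih.1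
  intro k
  have hupper_neg : (2 * σ₂ - 1) / (1 - σ₂) < 0 := div_neg_of_neg_of_pos (by linarith) (by linarith)
  exact ⟨hslope k, neg_of_div_neg_left ((hslope k).2.trans_lt hupper_neg) (by positivity)⟩
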